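/- arXiv:2212.11189 — 4 statements merged into one kernel-verified Lean document; each statement's English description precedes it below -/
import Mathlib

section
/- Let Π = { x ∈ ℝ^{d+1} : ⟨x, ν⟩ = 0 } be a hyperplane with unit normal ν. For every η > 0, the set 𝒯_η = { τ ∈ Π : dist(τ, ℤ^{d+1}) < η } is relatively dense in Π: there exists L > 0 such that every ball in Π of radius L (in the induced metric) contains a point of 𝒯_η. -/
/-!
The integer lattice `Λ` is cocompact: every point is a lattice translate of a point of the unit
cube. Cover the cube by finitely many balls of radius `η / 2` and, for each ball whose
`Λ`-translates meet the hyperplane `Π`, fix one point `r` of `Π` in them. If `x ∈ Π` lies in the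
same translated ball as `r`, then `x - r ∈ Π` is within `η` of `Λ` and at distance `‖r‖` from `x`;
so `L` can be taken to be the largest of the finitely many `‖r‖`.
-/

open Metric

theorem AddSubgroup.exists_bound_forall_exists_mem_near
    {E : Type*} [SeminormedAddCommGroup E] (H Λ : AddSubgroup E) {K : Set E}
    (hK : TotallyBounded K) (hcover : ∀ x, ∃ l ∈ Λ, x - l ∈ K) {η : ℝ} (hη : 0 < η) :
    ∃ L > (0 : ℝ), ∀ x ∈ H, ∃ τ ∈ H, (∃ l ∈ Λ, dist τ l < η) ∧ dist x τ ≤ L := by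
  obtain ⟨t, ht, hKt⟩ := totallyBounded_iff.1 hK (η / 2) (half_pos hη)
  have hrep : ∀ y ∈ t, ∃ r ∈ H, (∃ h ∈ H, ∃ l ∈ Λ, dist (h - l) y < η / 2) →
      ∃ l ∈ Λ, dist (r - l) y < η / 2 := by
    intro y _
    by_cases hy : ∃ h ∈ H, ∃ l ∈ Λ, dist (h - l) y < η / 2
    · obtain ⟨h, hH, hl⟩ := hy
      exact ⟨h, hH, fun _ => hl⟩
    · exact ⟨0, H.zero_mem, fun h => absurd h hy⟩
  choose! r hrH hr using hrep
  obtain ⟨C, hC⟩ := isBounded_iff_forall_norm_le.1 (ht.image r).isBounded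
  refine ⟨max C 1, by positivity, fun x hx => ?_⟩
  obtain ⟨l, hl, hxK⟩ := hcover x
  obtain ⟨y, hyt, hxy⟩ := Set.mem_iUnion₂.1 (hKt hxK)
  obtain ⟨l', hl', hry⟩ := hr y hyt ⟨x, hx, l, hl, hxy⟩
  refine ⟨x - r y, H.sub_mem hx (hrH y hyt), ⟨l - l', Λ.sub_mem hl hl', ?_⟩, ?_⟩
  · calc dist (x - r y) (l - l') = dist (x - l) (r y - l') := by
          rw [dist_eq_norm, dist_eq_norm]; congr 1; abel
      _ ≤ dist (x - l) y + dist (r y - l') y := dist_triangle_right _ _ _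
      _ < η / 2 + η / 2 := add_lt_add hxy hry
      _ = η := add_halves η
  · calc dist x (x - r y) = ‖r y‖ := by rw [dist_eq_norm, sub_sub_cancel]
      _ ≤ C := hC _ (Set.mem_image_of_mem r hyt)
      _ ≤ max C 1 := le_max_left C 1

def integerLattice (ι : Type*) : AddSubgroup (EuclideanSpace ℝ ι) where
  carrier := {w | ∀ i, ∃ m : ℤ, w i = m}
  zero_mem' i := ⟨0, by simp⟩
  add_mem' ha hb i := by
    obtain ⟨m, hm⟩ := ha i
    obtain ⟨n, hn⟩ := hb i
    exact ⟨m + n, by simp [hm, hn]⟩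
  neg_mem' ha i := by
    obtain ⟨m, hm⟩ := ha i
    exact ⟨-m, by simp [hm]⟩

theorem integerLattice.exists_sub_mem_unitCube {ι : Type*} (x : EuclideanSpace ℝ ι) :
    ∃ l ∈ integerLattice ι, x - l ∈ WithLp.toLp 2 '' Set.Icc (0 : ι → ℝ) 1 := by
  refine ⟨WithLp.toLp 2 fun i => (⌊x i⌋ : ℝ), fun i => ⟨⌊x i⌋, rfl⟩,
    fun i => Int.fract (x i), ?_, ?_⟩
  · exact ⟨fun i => Int.fract_nonneg _, fun i => (Int.fract_lt_one _).le⟩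
  · ext i; simp [Int.self_sub_floor]

theorem totallyBounded_unitCube (ι : Type*) [Fintype ι] :
    TotallyBounded (WithLp.toLp 2 '' Set.Icc (0 : ι → ℝ) 1 : Set (EuclideanSpace ℝ ι)) :=
  (isCompact_Icc.image (PiLp.continuous_toLp 2 _)).totallyBounded

theorem stmt7_general (d : ℕ) (ν : EuclideanSpace ℝ (Fin (d + 1)))
    (η : ℝ) (hη : 0 < η) :
    ∃ L > (0 : ℝ), ∀ x : EuclideanSpace ℝ (Fin (d + 1)), (inner ℝ x ν : ℝ) = 0 →
      ∃ τ : EuclideanSpace ℝ (Fin (d + 1)), (inner ℝ τ ν : ℝ) = 0 ∧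
        Metric.infDist τ {w : EuclideanSpace ℝ (Fin (d + 1)) | ∀ i, ∃ m : ℤ, w i = (m : ℝ)} < η ∧
        dist x τ ≤ L := by
  obtain ⟨L, hL, hgap⟩ := (ℝ ∙ ν)ᗮ.toAddSubgroup.exists_bound_forall_exists_mem_near
    (integerLattice _) (totallyBounded_unitCube _) integerLattice.exists_sub_mem_unitCube hη
  refine ⟨L, hL, fun x hx => ?_⟩
  obtain ⟨τ, hτ, ⟨l, hl, hτl⟩, hxτ⟩ :=
    hgap x (Submodule.mem_orthogonal_singleton_iff_inner_left.2 hx)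
  exact ⟨τ, Submodule.mem_orthogonal_singleton_iff_inner_left.1 hτ,
    (infDist_le_dist_of_mem hl).trans_lt hτl, hxτ⟩

theorem stmt7 (d : ℕ) (ν : EuclideanSpace ℝ (Fin (d + 1))) (hν : ‖ν‖ = 1)
    (η : ℝ) (hη : 0 < η) :
    ∃ L > (0 : ℝ), ∀ x : EuclideanSpace ℝ (Fin (d + 1)), (inner ℝ x ν : ℝ) = 0 →
      ∃ τ : EuclideanSpace ℝ (Fin (d + 1)), (inner ℝ τ ν : ℝ) = 0 ∧
        Metric.infDist τ {w : EuclideanSpace ℝ (Fin (d + 1)) | ∀ i, ∃ m : ℤ, w i = (m : ℝ)} < η ∧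
        dist x τ ≤ L :=
  stmt7_general d ν η hη
end

section
/- Let h > 0, C ≥ 0, and g : [0,h] → [0,∞) be integrable with ∫₀ʰ g ≤ C. Then for every δ with 0 < δ ≤ h and every η ∈ (0,δ), there exists y ∈ [h-δ, h] with g(y) ≤ C / (η · log(δ/η)). -/
/-! The average of `g` over `[h - δ, h]` is at most `C / δ`, and some point lies below the
average. Since `log x ≤ x - 1`, we have `η log (δ / η) ≤ δ - η < δ`, so
`C / δ ≤ C / (η log (δ / η))`. -/

open MeasureTheory

theorem Real.mul_log_div_lt {δ η : ℝ} (hδ : 0 < δ) (hη : 0 < η) :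
    η * Real.log (δ / η) < δ :=
  calc η * Real.log (δ / η) ≤ η * (δ / η - 1) :=
        mul_le_mul_of_nonneg_left (Real.log_le_sub_one_of_pos (by positivity)) hη.le
    _ = δ - η := by field_simp
    _ < δ := by linarith

theorem exists_mem_Icc_le_integral_div {f : ℝ → ℝ} {a b : ℝ} (hab : a < b)
    (hf : IntegrableOn f (Set.Icc a b)) :
    ∃ y ∈ Set.Icc a b, f y ≤ (∫ x in Set.Icc a b, f x) / (b - a) := by
  have hvol : volume.real (Set.Icc a b) = b - a := by
    simp [Measure.real, Real.volume_Icc, hab.le]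
  obtain ⟨y, hy, hle⟩ := exists_le_setAverage (by simp [hab]) (by simp) hf
  refine ⟨y, hy, hle.trans_eq ?_⟩
  rw [setAverage_eq, hvol, smul_eq_mul, inv_mul_eq_div]

theorem stmt11_general (h C δ η : ℝ) (hC : 0 ≤ C)
    (g : ℝ → ℝ) (hg : IntegrableOn g (Set.Icc 0 h))
    (hgnn : ∀ y ∈ Set.Icc 0 h, 0 ≤ g y)
    (hgC : ∫ y in Set.Icc 0 h, g y ≤ C)
    (hδ : 0 < δ) (hδh : δ ≤ h) (hη : 0 < η) (hηδ : η < δ) :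
    ∃ y ∈ Set.Icc (h - δ) h, g y ≤ C / (η * Real.log (δ / η)) := by
  have hsub : Set.Icc (h - δ) h ⊆ Set.Icc 0 h := Set.Icc_subset_Icc (by linarith) le_rfl
  have hint : ∫ y in Set.Icc (h - δ) h, g y ≤ C :=
    (setIntegral_mono_set hg (ae_restrict_of_forall_mem measurableSet_Icc hgnn)
      hsub.eventuallyLE).trans hgC
  obtain ⟨y, hy, hle⟩ := exists_mem_Icc_le_integral_div (by linarith) (hg.mono_set hsub)
  have hlog : 0 < η * Real.log (δ / η) :=
    mul_pos hη (Real.log_pos ((one_lt_div hη).2 hηδ))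
  refine ⟨y, hy, hle.trans ?_⟩
  rw [sub_sub_cancel]
  calc (∫ y in Set.Icc (h - δ) h, g y) / δ ≤ C / δ := by gcongr
    _ ≤ C / (η * Real.log (δ / η)) :=
      div_le_div_of_nonneg_left hC hlog (Real.mul_log_div_lt hδ hη).le

theorem stmt11 (h C δ η : ℝ) (hh : 0 < h) (hC : 0 ≤ C)
    (g : ℝ → ℝ) (hg : IntegrableOn g (Set.Icc 0 h))
    (hgnn : ∀ y ∈ Set.Icc 0 h, 0 ≤ g y)
    (hgC : ∫ y in Set.Icc 0 h, g y ≤ C)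
    (hδ : 0 < δ) (hδh : δ ≤ h) (hη : 0 < η) (hηδ : η < δ) :
    ∃ y ∈ Set.Icc (h - δ) h, g y ≤ C / (η * Real.log (δ / η)) :=
  stmt11_general h C δ η hC g hg hgnn hgC hδ hδh hη hηδ
end

section
/- Let Π ⊂ ℝ^{d+1} be a hyperplane through the origin such that Π ∩ ℤ^{d+1} = {0} (an irrational hyperplane), and let P : ℝ^{d+1} → Π be the orthogonal projection. Then P(ℤ^{d+1}) is dense in Π. -/
/-!
If `P(ℤ^{d+1})` were not dense, its closure would be a proper closed subgroup `H` of `Π`. Such a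
subgroup carries a nonzero linear functional `f` with integer values on `H`: split off the largest
linear subspace `V ⊆ H`; what is left of `H` in `Vᗮ` contains no line, hence is discrete, hence lies
in a lattice or in a proper subspace of `Vᗮ`. Then `f ∘ P` is integer-valued on `ℤ^{d+1}` and
vanishes on `Πᗮ`, so it equals `⟪w, ·⟫` for an integer point `w` of `Π`. Thus `w = 0` and `f = 0`.
-/

open Filter Topology

theorem tendsto_floor_div_mul {α : Type*} {l : Filter α} {r : α → ℝ}
    (hr : Tendsto r l (𝓝[>] 0)) (t : ℝ) :
    Tendsto (fun a => (⌊t / r a⌋ : ℝ) * r a) l (𝓝 t) := by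
  have hpos : ∀ᶠ a in l, 0 < r a := hr self_mem_nhdsWithin
  refine tendsto_of_tendsto_of_tendsto_of_le_of_le' (g := fun a => t - r a) ?_
    tendsto_const_nhds ?_ ?_
  · simpa using tendsto_const_nhds.sub (tendsto_nhds_of_tendsto_nhdsWithin hr)
  · filter_upwards [hpos] with a ha
    have h := mul_le_mul_of_nonneg_right (Int.sub_one_lt_floor (t / r a)).le ha.le
    rwa [sub_mul, div_mul_cancel₀ t ha.ne', one_mul] at h
  · filter_upwards [hpos] with a ha
    have h := mul_le_mul_of_nonneg_right (Int.floor_le (t / r a)) ha.le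
    rwa [div_mul_cancel₀ t ha.ne'] at h

namespace AddSubgroup

section Normed

variable {F : Type*} [NormedAddCommGroup F] [NormedSpace ℝ F] [FiniteDimensional ℝ F]
  {G : AddSubgroup F}

/-- Normalised small elements of `G` accumulate at some unit vector `u`, and integer multiples of
these small elements approximate every point of the line `ℝ u`. -/
theorem exists_forall_smul_mem_of_isClosed (hG : IsClosed (G : Set F))
    (h : ∀ ε > 0, ∃ x ∈ G, x ≠ 0 ∧ ‖x‖ < ε) : ∃ u ≠ (0 : F), ∀ t : ℝ, t • u ∈ G := by
  choose x hxG hx0 hxε using fun n : ℕ => h (1 / (n + 1)) (by positivity)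
  have hnorm : ∀ n, 0 < ‖x n‖ := fun n => norm_pos_iff.2 (hx0 n)
  have hsphere : ∀ n, ‖x n‖⁻¹ • x n ∈ Metric.sphere (0 : F) 1 := fun n => by
    simp [norm_smul, (hnorm n).ne']
  obtain ⟨u, hu, φ, hφ, hlim⟩ := (isCompact_sphere (0 : F) 1).tendsto_subseq hsphere
  refine ⟨u, ne_zero_of_mem_unit_sphere ⟨u, hu⟩, fun t => ?_⟩
  have hsmall : Tendsto (fun n => ‖x (φ n)‖) atTop (𝓝[>] 0) := by
    refine tendsto_nhdsWithin_of_tendsto_nhds_of_eventually_within _ ?_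
      (Eventually.of_forall fun n => hnorm (φ n))
    exact (squeeze_zero (fun n => norm_nonneg _) (fun n => (hxε n).le)
      tendsto_one_div_add_atTop_nhds_zero_nat).comp hφ.tendsto_atTop
  have hmem : ∀ n, ((⌊t / ‖x (φ n)‖⌋ : ℝ) * ‖x (φ n)‖) • (‖x (φ n)‖⁻¹ • x (φ n)) ∈ G := by
    intro n
    rw [smul_smul, mul_assoc, mul_inv_cancel₀ (hnorm _).ne', mul_one, Int.cast_smul_eq_zsmul]
    exact zsmul_mem (hxG _) _
  exact hG.mem_of_tendsto ((tendsto_floor_div_mul hsmall t).smul hlim)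
    (Eventually.of_forall hmem)

theorem discreteTopology_of_isClosed (hG : IsClosed (G : Set F))
    (hline : ∀ u : F, (∀ t : ℝ, t • u ∈ G) → u = 0) : DiscreteTopology G := by
  obtain ⟨ε, hε, hsep⟩ : ∃ ε > 0, ∀ x ∈ G, ‖x‖ < ε → x = 0 := by
    by_contra! hacc
    obtain ⟨u, hu0, hu⟩ := exists_forall_smul_mem_of_isClosed hG fun ε hε =>
      let ⟨x, hxG, hxε, hx0⟩ := hacc ε hε; ⟨x, hxG, hx0, hxε⟩
    exact hu0 (hline u hu)
  refine discreteTopology_iff_isOpen_singleton_zero.mpr ⟨Metric.ball 0 ε, Metric.isOpen_ball, ?_⟩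
  ext x
  simp only [Set.mem_preimage, mem_ball_zero_iff, Set.mem_singleton_iff]
  exact ⟨fun hx => Subtype.ext (hsep x x.2 hx), fun hx => by simpa [hx] using hε⟩

theorem exists_dual_ne_zero_forall_intCast_of_discreteTopology [Nontrivial F] (L : AddSubgroup F)
    [DiscreteTopology L] : ∃ f : F →ₗ[ℝ] ℝ, f ≠ 0 ∧ ∀ x ∈ L, ∃ m : ℤ, f x = m := by
  by_cases hspan : Submodule.span ℝ (L : Set F) = ⊤
  · have : DiscreteTopology L.toIntSubmodule := ‹DiscreteTopology L›
    have : IsZLattice ℝ L.toIntSubmodule := ⟨hspan⟩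
    let b := (Module.Free.chooseBasis ℤ L.toIntSubmodule).ofZLatticeBasis ℝ L.toIntSubmodule
    obtain ⟨i⟩ := b.index_nonempty
    refine ⟨b.coord i, fun h => by simpa using LinearMap.congr_fun h (b i), fun x hx => ?_⟩
    exact ⟨_, (Module.Free.chooseBasis ℤ _).ofZLatticeBasis_repr_apply ℝ _ ⟨x, hx⟩ i⟩
  · obtain ⟨f, hf0, hf⟩ := Submodule.exists_dual_map_eq_bot_of_lt_top
      (lt_top_iff_ne_top.2 hspan) inferInstance
    refine ⟨f, hf0, fun x hx => ⟨0, ?_⟩⟩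
    have : f x ∈ Submodule.map f (Submodule.span ℝ (L : Set F)) :=
      Submodule.mem_map_of_mem (Submodule.subset_span hx)
    simpa [hf] using this

end Normed

section Lineality

variable {F : Type*} [AddCommGroup F] [Module ℝ F] (G : AddSubgroup F)

def linealitySpace : Submodule ℝ F where
  carrier := {y | ∀ t : ℝ, t • y ∈ G}
  add_mem' ha hb t := by simpa [smul_add] using G.add_mem (ha t) (hb t)
  zero_mem' t := by rw [smul_zero]; exact G.zero_mem
  smul_mem' c y hy t := by simpa [smul_smul] using hy (t * c)

theorem linealitySpace_subset : (G.linealitySpace : Set F) ⊆ G := fun y hy => by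
  simpa using hy 1

end Lineality

section InnerProduct

variable {F : Type*} [NormedAddCommGroup F] [InnerProductSpace ℝ F] [FiniteDimensional ℝ F]
  {G : AddSubgroup F}

theorem exists_dual_ne_zero_forall_intCast_of_isClosed (hG : IsClosed (G : Set F))
    (hne : G ≠ ⊤) : ∃ f : F →ₗ[ℝ] ℝ, f ≠ 0 ∧ ∀ x ∈ G, ∃ m : ℤ, f x = m := by
  set V := G.linealitySpace
  set W := Vᗮ
  have : Nontrivial W := by
    refine Submodule.nontrivial_iff_ne_bot.mpr fun hW => hne ?_
    rw [Submodule.orthogonal_eq_bot_iff] at hW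
    exact eq_top_iff.2 fun y _ => G.linealitySpace_subset (hW ▸ Submodule.mem_top : y ∈ V)
  let N : AddSubgroup W := G.comap W.subtype.toAddMonoidHom
  have : DiscreteTopology N := by
    refine discreteTopology_of_isClosed (hG.preimage continuous_subtype_val) fun w hw => ?_
    have hwV : (w : F) ∈ V := fun t => hw t
    exact Subtype.ext (Submodule.disjoint_def.1 V.orthogonal_disjoint _ hwV w.2)
  obtain ⟨h, hh0, hh⟩ := N.exists_dual_ne_zero_forall_intCast_of_discreteTopology
  refine ⟨h ∘ₗ W.orthogonalProjectionOnto.toLinearMap, fun h0 => hh0 ?_, fun x hx => hh _ ?_⟩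
  · ext w
    simpa using LinearMap.congr_fun h0 (w : F)
  · have hV : x - W.starProjection x ∈ V := by
      simpa only [W, Submodule.orthogonal_orthogonal] using W.sub_starProjection_mem_orthogonal x
    simpa [N] using G.sub_mem hx (G.linealitySpace_subset hV)

end InnerProduct

end AddSubgroup

theorem Submodule.eq_zero_of_forall_orthogonalProjectionOnto_intCast {ι : Type*} [Fintype ι]
    {P : Submodule ℝ (EuclideanSpace ℝ ι)}
    (hirr : ∀ x ∈ P, (∀ i, ∃ m : ℤ, x i = (m : ℝ)) → x = 0) (f : P →ₗ[ℝ] ℝ)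
    (hf : ∀ z : ι → ℤ, ∃ m : ℤ,
      f (P.orthogonalProjectionOnto (WithLp.toLp 2 fun i => (z i : ℝ))) = m) :
    f = 0 := by
  classical
  let g := f.toContinuousLinearMap ∘L P.orthogonalProjectionOnto
  let w := (InnerProductSpace.toDual ℝ (EuclideanSpace ℝ ι)).symm g
  have hgw : ∀ y, g y = inner ℝ w y := fun y => InnerProductSpace.toDual_symm_apply.symm
  have hwP : w ∈ P := by
    rw [← P.orthogonal_orthogonal, Submodule.mem_orthogonal']
    intro u hu
    rw [← hgw]
    simp [g, P.orthogonalProjectionOnto_apply_of_mem_orthogonal hu]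
  have hwint : ∀ i, ∃ m : ℤ, w i = m := by
    intro i
    obtain ⟨m, hm⟩ := hf (Pi.single i 1)
    refine ⟨m, ?_⟩
    have hsingle : (WithLp.toLp 2 fun j => ((Pi.single i 1 : ι → ℤ) j : ℝ)) =
        EuclideanSpace.single i (1 : ℝ) := by
      ext j; by_cases h : j = i <;> simp [h]
    rw [← hm, hsingle]
    simpa [g, EuclideanSpace.inner_single_right] using (hgw (EuclideanSpace.single i 1)).symm
  have hw0 := hirr w hwP hwint
  ext p
  simpa [g, hw0] using hgw p

theorem stmt12_general (d : ℕ) (P : Submodule ℝ (EuclideanSpace ℝ (Fin (d + 1))))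
    (hirr : ∀ x ∈ P, (∀ i, ∃ m : ℤ, x i = (m : ℝ)) → x = 0) :
    Dense (Set.range fun z : Fin (d + 1) → ℤ =>
      (P.orthogonalProjectionOnto (WithLp.toLp 2 (fun i => (z i : ℝ)) : EuclideanSpace ℝ (Fin (d + 1))))) := by
  let φ : (Fin (d + 1) → ℤ) →+ P := AddMonoidHom.mk'
    (fun z => P.orthogonalProjectionOnto (WithLp.toLp 2 fun i => (z i : ℝ)))
    fun a b => by rw [← map_add]; congr; ext; simp
  change Dense (φ.range : Set P)
  by_contra hdense
  obtain ⟨f, hf0, hf⟩ := AddSubgroup.exists_dual_ne_zero_forall_intCast_of_isClosed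
    φ.range.isClosed_topologicalClosure fun htop => hdense <| by
      rw [dense_iff_closure_eq, ← AddSubgroup.topologicalClosure_coe, htop, AddSubgroup.coe_top]
  exact hf0 (P.eq_zero_of_forall_orthogonalProjectionOnto_intCast hirr f fun z =>
    hf _ (φ.range.le_topologicalClosure ⟨z, rfl⟩))

theorem stmt12 (d : ℕ) (P : Submodule ℝ (EuclideanSpace ℝ (Fin (d + 1))))
    (hdim : Module.finrank ℝ P = d)
    (hirr : ∀ x ∈ P, (∀ i, ∃ m : ℤ, x i = (m : ℝ)) → x = 0) :
    Dense (Set.range fun z : Fin (d + 1) → ℤ =>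
      (P.orthogonalProjectionOnto (WithLp.toLp 2 (fun i => (z i : ℝ)) : EuclideanSpace ℝ (Fin (d + 1))))) :=
  stmt12_general d P hirr
end

section
/- Let (g_A(T))_{T>0} be a family of nonnegative real numbers such that for all δ > η > 0 there exist constants L_η > 0 with: for all T > 0 and S > T + L_η, g_A(S) ≤ (T/(T+L_η))^d (1+η/α)(1 + 2β/(α·log(δ/η)))(g_A(T) + 1/T) + (ηh + β(δ+η))(T/(T+L_η))^d + βh(1 - (T/(T+L_η) - T/S)^d)(1+|A|)^p. Then limsup_{S→∞} g_A(S) ≤ liminf_{T→∞} g_A(T), and hence lim_{T→∞} g_A(T) exists. -/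
/-!
For fixed `η < δ`, letting first `S → ∞` and then `T → ∞` along times where `g` is close to its
liminf turns the hypothesis into `limsup g ≤ c * liminf g + e` with
`c = (1 + η/α)(1 + 2β/(α log (δ/η)))` and `e = ηh + β(δ + η)`. Taking `δ = √η`, we get
`log (δ/η) = -(log η)/2 → ∞`, so `c → 1` and `e → 0` as `η → 0⁺`.
-/

open Filter Topology Real

lemma le_mul_liminf_add_of_eventually_le {ι : Type*} {l : Filter ι} [l.NeBot] {g w : ι → ℝ}
    {M c e : ℝ} (hc : 0 ≤ c) (hg : IsBoundedUnder (· ≤ ·) l g) (hle : ∀ᶠ T in l, M ≤ c * g T + w T)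
    (hw : Tendsto w l (𝓝 e)) : M ≤ c * liminf g l + e := by
  have key : ∀ ε > 0, M ≤ c * (liminf g l + ε) + (e + ε) := by
    intro ε hε
    obtain ⟨T, hgT, hwT, hMT⟩ :=
      ((frequently_lt_of_liminf_lt hg.isCoboundedUnder_ge (lt_add_of_pos_right _ hε)).and_eventually
        ((hw.eventually (gt_mem_nhds (lt_add_of_pos_right e hε))).and hle)).exists
    calc M ≤ c * g T + w T := hMT
      _ ≤ c * (liminf g l + ε) + (e + ε) := by gcongr
  have hlim : Tendsto (fun ε => c * (liminf g l + ε) + (e + ε)) (𝓝[>] 0)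
      (𝓝 (c * liminf g l + e)) := by
    have hcont : Continuous fun ε : ℝ => c * (liminf g l + ε) + (e + ε) := by fun_prop
    simpa using (hcont.tendsto 0).mono_left nhdsWithin_le_nhds
  exact ge_of_tendsto hlim (eventually_nhdsWithin_of_forall key)

lemma tendsto_div_self_add_const_atTop (L : ℝ) :
    Tendsto (fun T : ℝ => T / (T + L)) atTop (𝓝 1) := by
  have hL : Tendsto (fun T : ℝ => L / (T + L)) atTop (𝓝 0) :=
    tendsto_const_nhds.div_atTop (tendsto_atTop_add_const_right _ L tendsto_id)
  have h1 : Tendsto (fun T : ℝ => 1 - L / (T + L)) atTop (𝓝 1) := by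
    simpa using (tendsto_const_nhds (x := (1 : ℝ))).sub hL
  refine h1.congr' ?_
  filter_upwards [eventually_gt_atTop (-L)] with T hT
  field_simp [show T + L ≠ 0 by linarith]
  ring

lemma limsup_le_mul_liminf_add {g : ℝ → ℝ} {d : ℕ} {c e K L : ℝ} (hc : 0 ≤ c) (hL : 0 ≤ L)
    (hg0 : ∀ᶠ T in atTop, 0 ≤ g T) (hg_le : IsBoundedUnder (· ≤ ·) atTop g)
    (hrec : ∀ T > 0, ∀ S, T + L < S → g S ≤ (T / (T + L)) ^ d * c * (g T + 1 / T)
      + e * (T / (T + L)) ^ d + K * (1 - (T / (T + L) - T / S) ^ d)) :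
    limsup g atTop ≤ c * liminf g atTop + e := by
  set t : ℝ → ℝ := fun T => T / (T + L)
  have hlimsup : ∀ T > 0, limsup g atTop ≤
      t T ^ d * c * (g T + 1 / T) + e * t T ^ d + K * (1 - t T ^ d) := by
    intro T hT
    have hlim : Tendsto (fun S => t T ^ d * c * (g T + 1 / T) + e * t T ^ d
        + K * (1 - (t T - T / S) ^ d)) atTop
        (𝓝 (t T ^ d * c * (g T + 1 / T) + e * t T ^ d + K * (1 - t T ^ d))) := by
      have hcont : Continuous fun x => t T ^ d * c * (g T + 1 / T) + e * t T ^ d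
          + K * (1 - (t T - x) ^ d) := by fun_prop
      simpa [Function.comp_def] using
        (hcont.tendsto 0).comp (tendsto_const_nhds.div_atTop tendsto_id)
    rw [← hlim.limsup_eq]
    exact limsup_le_limsup ((eventually_gt_atTop (T + L)).mono (hrec T hT))
      (isBoundedUnder_of_eventually_ge hg0).isCoboundedUnder_le hlim.isBoundedUnder_le
  refine le_mul_liminf_add_of_eventually_le hc hg_le (w := fun T => c * t T ^ d * (1 / T)
    + e * t T ^ d + K * (1 - t T ^ d)) ?_ ?_
  · filter_upwards [eventually_gt_atTop 0, hg0] with T hT hgT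
    have ht0 : 0 ≤ t T := div_nonneg hT.le (by linarith)
    have ht1 : t T ^ d ≤ 1 := pow_le_one₀ ht0 ((div_le_one (by linarith)).2 (by linarith))
    calc limsup g atTop ≤ t T ^ d * c * (g T + 1 / T) + e * t T ^ d + K * (1 - t T ^ d) :=
          hlimsup T hT
      _ = t T ^ d * (c * g T) + (c * t T ^ d * (1 / T) + e * t T ^ d + K * (1 - t T ^ d)) := by
          ring
      _ ≤ c * g T + (c * t T ^ d * (1 / T) + e * t T ^ d + K * (1 - t T ^ d)) := by
          have := mul_le_of_le_one_left (mul_nonneg hc hgT) ht1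
          linarith
  · have ht : Tendsto (fun T => t T ^ d) atTop (𝓝 1) := by
      simpa using (tendsto_div_self_add_const_atTop L).pow d
    simpa using (((ht.const_mul c).mul tendsto_inv_atTop_zero).add (ht.const_mul e)).add
      (((tendsto_const_nhds (x := (1 : ℝ))).sub ht).const_mul K)

lemma tendsto_log_sqrt_div_self : Tendsto (fun η => log (√η / η)) (𝓝[>] 0) atTop := by
  refine (tendsto_neg_atBot_atTop.comp (tendsto_log_nhdsGT_zero.atBot_div_const two_pos)).congr' ?_
  filter_upwards [self_mem_nhdsWithin] with η hη
  simp [sqrt_div_self, log_inv, log_sqrt hη.le]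

lemma tendsto_one_add_div_mul_one_add_div_log (α β : ℝ) :
    Tendsto (fun η => (1 + η / α) * (1 + 2 * β / (α * log (√η / η)))) (𝓝[>] 0) (𝓝 1) := by
  have h1 : Tendsto (fun η : ℝ => 1 + η / α) (𝓝[>] 0) (𝓝 1) := by
    have hcont : Continuous fun η : ℝ => 1 + η / α := by fun_prop
    simpa using (hcont.tendsto 0).mono_left nhdsWithin_le_nhds
  have h2 : Tendsto (fun η => 1 + 2 * β / (α * log (√η / η))) (𝓝[>] 0) (𝓝 1) := by
    have h : Tendsto (fun η => 1 + 2 * β / α * (log (√η / η))⁻¹) (𝓝[>] 0) (𝓝 1) := by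
      simpa using ((tendsto_inv_atTop_zero.comp tendsto_log_sqrt_div_self).const_mul
        (2 * β / α)).const_add 1
    exact h.congr fun η => by ring
  simpa using h1.mul h2

theorem stmt17_general (d : ℕ) (α β h p a : ℝ)
    (g : ℝ → ℝ)
    (hgb : ∀ T > (0 : ℝ), 0 ≤ g T ∧ g T ≤ β * (1 + a ^ p))
    (hrec : ∀ δ η : ℝ, 0 < η → η < δ → ∃ L > (0 : ℝ), ∀ T > (0 : ℝ), ∀ S, T + L < S →
      g S ≤ (T / (T + L)) ^ d * (1 + η / α) * (1 + 2 * β / (α * Real.log (δ / η)))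
            * (g T + 1 / T)
          + (η * h + β * (δ + η)) * (T / (T + L)) ^ d
          + β * h * (1 - (T / (T + L) - T / S) ^ d) * (1 + a) ^ p) :
    Filter.limsup g Filter.atTop ≤ Filter.liminf g Filter.atTop ∧
      ∃ l : ℝ, Filter.Tendsto g Filter.atTop (nhds l) := by
  have hg0 : ∀ᶠ T in atTop, 0 ≤ g T := (eventually_gt_atTop 0).mono fun T hT => (hgb T hT).1
  have hg_le : IsBoundedUnder (· ≤ ·) atTop g :=
    isBoundedUnder_of_eventually_le ((eventually_gt_atTop 0).mono fun T hT => (hgb T hT).2)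
  have hg_ge : IsBoundedUnder (· ≥ ·) atTop g := isBoundedUnder_of_eventually_ge hg0
  set c : ℝ → ℝ := fun η => (1 + η / α) * (1 + 2 * β / (α * log (√η / η)))
  have hc : Tendsto c (𝓝[>] 0) (𝓝 1) := tendsto_one_add_div_mul_one_add_div_log α β
  have he : Tendsto (fun η => η * h + β * (√η + η)) (𝓝[>] 0) (𝓝 0) := by
    have hcont : Continuous fun η => η * h + β * (√η + η) := by fun_prop
    simpa using (hcont.tendsto 0).mono_left nhdsWithin_le_nhds
  have hbound : ∀ᶠ η in 𝓝[>] 0,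
      limsup g atTop ≤ c η * liminf g atTop + (η * h + β * (√η + η)) := by
    filter_upwards [hc.eventually (lt_mem_nhds one_pos), Ioo_mem_nhdsGT one_pos] with η hcη hη
    have hη_lt : η < √η := (lt_sqrt hη.1.le).2 (by nlinarith [hη.1, hη.2])
    obtain ⟨L, hL, hLrec⟩ := hrec (√η) η hη.1 hη_lt
    exact limsup_le_mul_liminf_add (K := β * h * (1 + a) ^ p) hcη.le hL.le hg0 hg_le
      fun T hT S hS => (hLrec T hT S hS).trans_eq (by simp only [c]; ring)
  have hle : limsup g atTop ≤ liminf g atTop :=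
    ge_of_tendsto (by simpa using (hc.mul_const _).add he) hbound
  exact ⟨hle, _, tendsto_of_le_liminf_of_limsup_le le_rfl hle hg_le hg_ge⟩

theorem stmt17 (d : ℕ) (hd : 1 ≤ d) (α β h p a : ℝ)
    (hα : 0 < α) (hβ : 0 < β) (hh : 0 < h) (hp : 1 < p) (ha : 0 ≤ a)
    (g : ℝ → ℝ)
    (hgb : ∀ T > (0 : ℝ), 0 ≤ g T ∧ g T ≤ β * (1 + a ^ p))
    (hrec : ∀ δ η : ℝ, 0 < η → η < δ → ∃ L > (0 : ℝ), ∀ T > (0 : ℝ), ∀ S, T + L < S →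
      g S ≤ (T / (T + L)) ^ d * (1 + η / α) * (1 + 2 * β / (α * Real.log (δ / η)))
            * (g T + 1 / T)
          + (η * h + β * (δ + η)) * (T / (T + L)) ^ d
          + β * h * (1 - (T / (T + L) - T / S) ^ d) * (1 + a) ^ p) :
    Filter.limsup g Filter.atTop ≤ Filter.liminf g Filter.atTop ∧
      ∃ l : ℝ, Filter.Tendsto g Filter.atTop (nhds l) :=
  stmt17_general d α β h p a g hgb hrec
end
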